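/- Let λ and μ be vectors of integers with k ≥ λ_1 ≥ ⋯ ≥ λ_r ≥ 0 and k ≥ μ_1 ≥ ⋯ ≥ μ_r ≥ 0, and let ρ := (r−1, r−2, …, 1, 0). Then S_λ(ζ_{μ+ρ}) · Δ(ζ_{μ+ρ}) = S_μ(ζ_{λ+ρ}) · Δ(ζ_{λ+ρ}), where Δ(z_1,…,z_r) := ∏_{1≤i<j≤r}(z_i − z_j); indeed both sides equal det((exp(2πi(λ_i+ρ_i)(μ_j+ρ_j)/(r+k)))_{1≤i,j≤r}). -/

import Mathlib

/-!
Put `w := μ + ρ`. Since `μ` is a partition with parts at most `k`, the entries of `w` are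
distinct integers in `[0, r + k)`, so the points `ζ_w` are distinct `(r+k)`-th roots of unity
and `Δ(ζ_w)`, which is the denominator of `S_λ(ζ_w)`, does not vanish. Hence
`S_λ(ζ_w) Δ(ζ_w) = det(ζ_{w_j}^{λ_i+ρ_i}) = det(exp(2πi(λ_i+ρ_i)(μ_j+ρ_j)/(r+k)))`, a matrix
that is transposed by exchanging `λ` and `μ`.
-/

open scoped BigOperators
open Complex

noncomputable section

namespace VerlindePaper

/-- The Schur value `S_λ(z₁,…,z_r) = det(z_j^{λ_i+r-i}) / det(z_j^{r-i})`
(indices `i` are 0-based, so the exponent is `λ i + (r - 1 - i)`). -/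
noncomputable def schur {r : ℕ} (lam : Fin r → ℤ) (z : Fin r → ℂ) : ℂ :=
  Matrix.det (Matrix.of fun i j : Fin r => z j ^ (lam i + ((r : ℤ) - 1 - (i : ℕ)))) /
    Matrix.det (Matrix.of fun i j : Fin r => z j ^ ((r : ℤ) - 1 - (i : ℕ)))

/-- `ζ_v = (e^{2πi v_1/(r+k)}, …, e^{2πi v_r/(r+k)})`. -/
noncomputable def zeta (r k : ℕ) (v : Fin r → ℤ) : Fin r → ℂ :=
  fun j => Complex.exp (2 * (Real.pi : ℂ) * Complex.I * (v j : ℂ) / ((r : ℂ) + (k : ℂ)))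

/-- `D(v) = ∏_{i<j} (2 sin(π(v_i - v_j)/(r+k)))²`. -/
noncomputable def Dv (r k : ℕ) (v : Fin r → ℤ) : ℝ :=
  ∏ p ∈ Finset.univ.filter (fun p : Fin r × Fin r => p.1 < p.2),
    (2 * Real.sin (Real.pi * ((v p.1 : ℝ) - (v p.2 : ℝ)) / ((r : ℝ) + (k : ℝ)))) ^ 2

/-- `P̄_k = {μ : 0 ≤ μ_r ≤ ⋯ ≤ μ_1 ≤ k}` (0-based: `μ 0 = μ_1`). -/
def Pbar (r k : ℕ) : Finset (Fin r → ℤ) :=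
  (Finset.Icc 0 (fun _ => (k : ℤ))).filter (fun μ => ∀ i j : Fin r, i ≤ j → μ j ≤ μ i)

/-- `P_k = {μ : 0 ≤ μ_r ≤ ⋯ ≤ μ_1 ≤ k-1}`. -/
def Pk (r k : ℕ) : Finset (Fin r → ℤ) :=
  (Finset.Icc 0 (fun _ => (k : ℤ) - 1)).filter (fun μ => ∀ i j : Fin r, i ≤ j → μ j ≤ μ i)

/-- `W_k = {μ ∈ P̄_k : μ_r = 0}`. -/
def Wk (r k : ℕ) : Finset (Fin r → ℤ) :=
  (Pbar r k).filter (fun μ => ∀ i : Fin r, (i : ℕ) = r - 1 → μ i = 0)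

/-- `μ* = (k - μ_r, k - μ_{r-1}, …, k - μ_1)`. -/
def mustar (k : ℕ) {r : ℕ} (μ : Fin r → ℤ) : Fin r → ℤ :=
  fun i => (k : ℤ) - μ i.rev

/-- `μ ∼ ν` iff `μ - ν` is a constant vector. -/
def sim {r : ℕ} (μ ν : Fin r → ℤ) : Prop := ∃ a : ℤ, ∀ i, μ i = ν i + a

/-- The index set of the Verlinde sums: integer vectors with
`0 = v_r < v_{r-1} < ⋯ < v_1 < r + k`. -/
def Vset (r k : ℕ) : Finset (Fin r → ℤ) :=
  (Finset.Icc 0 (fun _ => (r : ℤ) + (k : ℤ) - 1)).filter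
    (fun v => (∀ i j : Fin r, i < j → v j < v i) ∧ ∀ i : Fin r, (i : ℕ) = r - 1 → v i = 0)

/-- The Verlinde number `V_g(r,d,(λ_x)_{x∈I})`. -/
noncomputable def verlinde (r k : ℕ) (g : ℕ) (d : ℤ) {I : Type*} [Fintype I]
    (lam : I → Fin r → ℤ) : ℂ :=
  (-1 : ℂ) ^ (d * ((r : ℤ) - 1)) * ((k : ℂ) / (r : ℂ)) ^ g *
    ((r : ℂ) * ((r : ℂ) + (k : ℂ)) ^ (r - 1)) ^ ((g : ℤ) - 1) *
    ∑ v ∈ Vset r k,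
      Complex.exp (2 * (Real.pi : ℂ) * Complex.I *
          ((d : ℂ) / (r : ℂ) -
            (∑ x, ∑ i, (lam x i : ℂ)) / ((r : ℂ) * ((r : ℂ) + (k : ℂ)))) *
          (∑ i, (v i : ℂ))) *
        (∏ x, schur (lam x) (zeta r k v)) * ((Dv r k v : ℂ)) ^ (1 - (g : ℤ))

/-- The Hecke transformation
`H¹(μ) = (k - μ_{r-1} + μ_r, μ_1 - μ_{r-1}, …, μ_{r-2} - μ_{r-1}, 0)`. -/
def H1 (k : ℕ) {r : ℕ} (μ : Fin r → ℤ) : Fin r → ℤ := fun j =>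
  have hj : (j : ℕ) < r := j.isLt
  if (j : ℕ) = 0 then (k : ℤ) - μ ⟨r - 2, by omega⟩ + μ ⟨r - 1, by omega⟩
  else μ ⟨(j : ℕ) - 1, by omega⟩ - μ ⟨r - 2, by omega⟩

/-- The iterated Hecke transformation `H^m = H¹ ∘ ⋯ ∘ H¹`. -/
def Hm (k : ℕ) {r : ℕ} (m : ℕ) (μ : Fin r → ℤ) : Fin r → ℤ := (H1 k)^[m] μ

/-- `μ ∈ Y(λ, ω_s)`: `μ` is a partition obtained from `λ` by adding `s` boxes,
no two in the same row. -/
def inY {r : ℕ} (lam : Fin r → ℤ) (s : ℕ) (μ : Fin r → ℤ) : Prop :=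
  (∀ i j : Fin r, i ≤ j → μ j ≤ μ i) ∧ (∀ i, μ i - lam i = 0 ∨ μ i - lam i = 1) ∧
    (∑ i, μ i) = (∑ i, lam i) + (s : ℤ)

/-- The Vandermonde product `Δ(z) = ∏_{i<j} (z_i - z_j)`. -/
noncomputable def vand {r : ℕ} (z : Fin r → ℂ) : ℂ :=
  ∏ p ∈ Finset.univ.filter (fun p : Fin r × Fin r => p.1 < p.2), (z p.1 - z p.2)

/-- `J_v(t) = Σ_{τ ∈ S_r} sgn(τ) exp(2πi (Σ_j v_{τ(j)} t_j)/(r+k))`. -/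
noncomputable def Jv (r k : ℕ) (v : Fin r → ℤ) (t : Fin r → Fin (r + k)) : ℂ :=
  ∑ τ : Equiv.Perm (Fin r), ((Equiv.Perm.sign τ : ℤ) : ℂ) *
    Complex.exp (2 * (Real.pi : ℂ) * Complex.I *
      (∑ j, (v (τ j) : ℂ) * ((t j : ℕ) : ℂ)) / ((r : ℂ) + (k : ℂ)))

open Matrix

/-- `μ + ρ`, where `ρ = (r-1, …, 1, 0)`. -/
def addRho {r : ℕ} (μ : Fin r → ℤ) : Fin r → ℤ := fun i => μ i + ((r : ℤ) - 1 - (i : ℕ))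

lemma prod_filter_lt_eq_prod_Ioi {M : Type*} [CommMonoid M] {r : ℕ} (f : Fin r → Fin r → M) :
    ∏ p ∈ Finset.univ.filter (fun p : Fin r × Fin r => p.1 < p.2), f p.1 p.2 =
      ∏ i : Fin r, ∏ j ∈ Finset.Ioi i, f i j := by
  rw [Finset.prod_filter, Fintype.prod_prod_type]
  refine Finset.prod_congr rfl fun i _ => ?_
  rw [← Finset.prod_filter]
  congr 1
  ext j
  simp

lemma vand_ne_zero {r : ℕ} {z : Fin r → ℂ} (hz : Function.Injective z) : vand z ≠ 0 :=
  Finset.prod_ne_zero_iff.mpr fun _ hp =>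
    sub_ne_zero.mpr fun h => (Finset.mem_filter.mp hp).2.ne (hz h)

/-- A Vandermonde determinant with rows and columns reversed. -/
lemma det_zpow_rho_eq_vand {r : ℕ} (z : Fin r → ℂ) :
    det (of fun i j : Fin r => z j ^ ((r : ℤ) - 1 - (i : ℕ))) = vand z := by
  have hrev : (of fun i j : Fin r => z j ^ ((r : ℤ) - 1 - (i : ℕ))) =
      (vandermonde (z ∘ Fin.rev))ᵀ.submatrix Fin.revPerm Fin.revPerm := by
    ext i j
    have hexp : (r : ℤ) - 1 - (i : ℕ) = ((i.rev : ℕ) : ℤ) := by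
      rw [Fin.val_rev]; omega
    rw [of_apply, hexp, zpow_natCast]
    simp
  rw [hrev, det_submatrix_equiv_self, det_transpose, det_vandermonde, vand,
    ← prod_filter_lt_eq_prod_Ioi fun i j => (z ∘ Fin.rev) j - (z ∘ Fin.rev) i]
  refine Finset.prod_bij' (fun p _ => (p.2.rev, p.1.rev)) (fun p _ => (p.2.rev, p.1.rev))
    ?_ ?_ ?_ ?_ ?_ <;> intro p hp <;> simp_all

lemma schur_mul_vand {r : ℕ} (lam : Fin r → ℤ) {z : Fin r → ℂ} (hz : Function.Injective z) :
    schur lam z * vand z = det (of fun i j : Fin r => z j ^ addRho lam i) := by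
  rw [schur, det_zpow_rho_eq_vand, div_mul_cancel₀ _ (vand_ne_zero hz)]
  rfl

lemma zeta_eq_zpow (r k : ℕ) (v : Fin r → ℤ) (j : Fin r) :
    zeta r k v j = exp (2 * Real.pi * I / ((r + k : ℕ) : ℂ)) ^ v j := by
  rw [← exp_int_mul, zeta]
  push_cast
  ring_nf

lemma zeta_zpow (r k : ℕ) (v : Fin r → ℤ) (a : ℤ) (j : Fin r) :
    zeta r k v j ^ a = exp (2 * Real.pi * I * a * v j / (r + k)) := by
  rw [zeta, ← exp_int_mul]
  ring_nf

lemma zeta_injective {r k : ℕ} {v : Fin r → ℤ} (hv : Function.Injective v)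
    (hlt : ∀ i j, v i - v j < r + k) : Function.Injective (zeta r k v) := by
  intro i j hij
  have hprim := isPrimitiveRoot_exp (r + k) (by have := i.pos; omega)
  rw [zeta_eq_zpow, zeta_eq_zpow, ← div_eq_one_iff_eq (zpow_ne_zero _ (exp_ne_zero _)),
    ← zpow_sub₀ (exp_ne_zero _), hprim.zpow_eq_one_iff_dvd] at hij
  refine hv (sub_eq_zero.mp (Int.eq_zero_of_abs_lt_dvd hij ?_))
  rw [abs_sub_lt_iff]
  exact_mod_cast (⟨hlt i j, hlt j i⟩ : _ ∧ _)

lemma addRho_strictAnti {r : ℕ} {μ : Fin r → ℤ} (hμ : ∀ i j : Fin r, i ≤ j → μ j ≤ μ i) :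
    StrictAnti (addRho μ) := by
  intro i j hij
  have := hμ i j hij.le
  have : (i : ℕ) < j := hij
  simp only [addRho]
  omega

lemma addRho_sub_lt {r k : ℕ} {μ : Fin r → ℤ} (hμ : μ ∈ Pbar r k) (i j : Fin r) :
    addRho μ i - addRho μ j < r + k := by
  simp only [Pbar, Finset.mem_filter, Finset.mem_Icc] at hμ
  have : 0 ≤ μ j := hμ.1.1 j
  have : μ i ≤ k := hμ.1.2 i
  have := j.isLt
  simp only [addRho]
  omega

lemma schur_mul_vand_zeta_addRho {r k : ℕ} (lam : Fin r → ℤ) {μ : Fin r → ℤ}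
    (hμ : μ ∈ Pbar r k) :
    schur lam (zeta r k (addRho μ)) * vand (zeta r k (addRho μ)) =
      det (of fun i j : Fin r => exp (2 * Real.pi * I * (addRho lam i : ℂ) *
        (addRho μ j : ℂ) / (r + k))) := by
  have hinj := zeta_injective (addRho_strictAnti (Finset.mem_filter.mp hμ).2).injective
    (addRho_sub_lt hμ)
  simp only [schur_mul_vand lam hinj, zeta_zpow]

theorem schur_vand_symm_general (r k : ℕ)
    (lam μ : Fin r → ℤ) (hlam : lam ∈ Pbar r k) (hμ : μ ∈ Pbar r k) :
    schur lam (zeta r k (fun i => μ i + ((r : ℤ) - 1 - (i : ℕ)))) *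
        vand (zeta r k (fun i => μ i + ((r : ℤ) - 1 - (i : ℕ)))) =
      Matrix.det (Matrix.of fun i j : Fin r =>
        Complex.exp (2 * (Real.pi : ℂ) * Complex.I *
          ((lam i + ((r : ℤ) - 1 - (i : ℕ)) : ℤ) : ℂ) *
          ((μ j + ((r : ℤ) - 1 - (j : ℕ)) : ℤ) : ℂ) / ((r : ℂ) + (k : ℂ)))) ∧
    schur μ (zeta r k (fun i => lam i + ((r : ℤ) - 1 - (i : ℕ)))) *
        vand (zeta r k (fun i => lam i + ((r : ℤ) - 1 - (i : ℕ)))) =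
      Matrix.det (Matrix.of fun i j : Fin r =>
        Complex.exp (2 * (Real.pi : ℂ) * Complex.I *
          ((lam i + ((r : ℤ) - 1 - (i : ℕ)) : ℤ) : ℂ) *
          ((μ j + ((r : ℤ) - 1 - (j : ℕ)) : ℤ) : ℂ) / ((r : ℂ) + (k : ℂ)))) := by
  refine ⟨schur_mul_vand_zeta_addRho lam hμ, ?_⟩
  refine (schur_mul_vand_zeta_addRho μ hlam).trans ?_
  rw [← det_transpose]
  congr 1
  ext i j
  simp only [transpose_apply, of_apply, addRho]
  ring_nf

/-- symmetry `S_λ(ζ_{μ+ρ})·Δ(ζ_{μ+ρ}) = S_μ(ζ_{λ+ρ})·Δ(ζ_{λ+ρ})`,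
both sides being `det(exp(2πi(λ_i+ρ_i)(μ_j+ρ_j)/(r+k)))`, where `ρ = (r-1,…,1,0)`. -/
theorem schur_vand_symm (r k : ℕ) (hr : 1 ≤ r) (hk : 1 ≤ k)
    (lam μ : Fin r → ℤ) (hlam : lam ∈ Pbar r k) (hμ : μ ∈ Pbar r k) :
    schur lam (zeta r k (fun i => μ i + ((r : ℤ) - 1 - (i : ℕ)))) *
        vand (zeta r k (fun i => μ i + ((r : ℤ) - 1 - (i : ℕ)))) =
      Matrix.det (Matrix.of fun i j : Fin r =>
        Complex.exp (2 * (Real.pi : ℂ) * Complex.I *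
          ((lam i + ((r : ℤ) - 1 - (i : ℕ)) : ℤ) : ℂ) *
          ((μ j + ((r : ℤ) - 1 - (j : ℕ)) : ℤ) : ℂ) / ((r : ℂ) + (k : ℂ)))) ∧
    schur μ (zeta r k (fun i => lam i + ((r : ℤ) - 1 - (i : ℕ)))) *
        vand (zeta r k (fun i => lam i + ((r : ℤ) - 1 - (i : ℕ)))) =
      Matrix.det (Matrix.of fun i j : Fin r =>
        Complex.exp (2 * (Real.pi : ℂ) * Complex.I *
          ((lam i + ((r : ℤ) - 1 - (i : ℕ)) : ℤ) : ℂ) *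
          ((μ j + ((r : ℤ) - 1 - (j : ℕ)) : ℤ) : ℂ) / ((r : ℂ) + (k : ℂ)))) :=
  schur_vand_symm_general r k lam μ hlam hμ

end VerlindePaper
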